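/- arXiv:2406.09932 — 2 statements merged into one kernel-verified Lean document; each statement's English description precedes it below -/
import Mathlib

section
/- Let K be a real symmetric positive definite n×n matrix, let e : Fin m → Fin n be injective, with K_CC := K∘(e,e), K_XC := K∘(id,e), K_CX := (K_XC)ᵀ, and Q := K_XC K_CC⁻¹ K_CX. For every α ∈ ℝⁿ and every β' ∈ ℝᵐ, writing δ' := α − ι(β') with ι the extension by zero along e, one has δ'ᵀ K δ' ≥ αᵀ (K − Q) α, with equality when β' = K_CC⁻¹ K_CX α. -/
open Matrix

noncomputable section

/-- The `n × m` matrix `K_XC` of kernel evaluations between all points and control points. -/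
def KXC {n m : ℕ} (K : Matrix (Fin n) (Fin n) ℝ) (e : Fin m → Fin n) :
    Matrix (Fin n) (Fin m) ℝ :=
  K.submatrix id e

/-- The `m × m` control-point kernel matrix `K_CC`. -/
def KCC {n m : ℕ} (K : Matrix (Fin n) (Fin n) ℝ) (e : Fin m → Fin n) :
    Matrix (Fin m) (Fin m) ℝ :=
  K.submatrix e e

/-- The `m × n` matrix `K_CX = (K_XC)ᵀ`. -/
def KCX {n m : ℕ} (K : Matrix (Fin n) (Fin n) ℝ) (e : Fin m → Fin n) :
    Matrix (Fin m) (Fin n) ℝ :=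
  (KXC K e)ᵀ

/-- The Nyström approximation `Q = K_XC ⬝ K_CC⁻¹ ⬝ K_CX` of `K` based on control indices `e`. -/
def nystrom {n m : ℕ} (K : Matrix (Fin n) (Fin n) ℝ) (e : Fin m → Fin n) :
    Matrix (Fin n) (Fin n) ℝ :=
  KXC K e * (KCC K e)⁻¹ * KCX K e

end

/-! With `S = K_CC`, `c = K_CX α` and `ι` the extension by zero along `e`, symmetry of `K` gives
`(α - ι β')ᵀ K (α - ι β') = αᵀKα - 2 β'ᵀc + β'ᵀSβ'` and `αᵀQα = cᵀS⁻¹c`. Completing the square,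
the excess over `αᵀ(K - Q)α` is `(β' - S⁻¹c)ᵀ S (β' - S⁻¹c)`, which is nonnegative because the
principal submatrix `S` of `K` is positive definite, and vanishes at `β' = S⁻¹c`. -/

open Function

section ExtendByZero

variable {ι κ ν R : Type*} [Fintype ι] [Fintype κ] [NonUnitalNonAssocSemiring R]
  {e : ι → κ}

lemma extend_zero_dotProduct (he : Injective e) (β : ι → R) (v : κ → R) :
    extend e β 0 ⬝ᵥ v = β ⬝ᵥ (v ∘ e) :=
  (Fintype.sum_of_injective e he _ _ (fun _ hj ↦ by simp [extend_apply' _ _ _ hj])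
    fun i ↦ by simp [he.extend_apply]).symm

lemma dotProduct_extend_zero (he : Injective e) (v : κ → R) (β : ι → R) :
    v ⬝ᵥ extend e β 0 = (v ∘ e) ⬝ᵥ β :=
  (Fintype.sum_of_injective e he _ _ (fun _ hj ↦ by simp [extend_apply' _ _ _ hj])
    fun i ↦ by simp [he.extend_apply]).symm

lemma mulVec_extend_zero (he : Injective e) (A : Matrix ν κ R) (β : ι → R) :
    A *ᵥ extend e β 0 = A.submatrix id e *ᵥ β := by
  ext i
  exact dotProduct_extend_zero he (A i) β

lemma extend_zero_dotProduct_mulVec_extend_zero (he : Injective e) (A : Matrix κ κ R)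
    (β : ι → R) :
    extend e β 0 ⬝ᵥ (A *ᵥ extend e β 0) = β ⬝ᵥ (A.submatrix e e *ᵥ β) := by
  rw [mulVec_extend_zero he, extend_zero_dotProduct he]
  rfl

end ExtendByZero

section QuadraticForm

variable {ι κ R : Type*} [Fintype ι] [Fintype κ]

lemma Matrix.IsSymm.dotProduct_mulVec_sub [CommRing R] {A : Matrix ι ι R} (hA : A.IsSymm)
    (x y : ι → R) :
    (x - y) ⬝ᵥ (A *ᵥ (x - y)) = x ⬝ᵥ (A *ᵥ x) - 2 * (y ⬝ᵥ (A *ᵥ x)) + y ⬝ᵥ (A *ᵥ y) := by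
  have hyx : x ⬝ᵥ (A *ᵥ y) = y ⬝ᵥ (A *ᵥ x) := by
    rw [dotProduct_mulVec, ← mulVec_transpose, hA.eq, dotProduct_comm]
  rw [mulVec_sub, dotProduct_sub, sub_dotProduct, sub_dotProduct, hyx]
  ring

lemma dotProduct_mul_mul_transpose_mulVec [CommSemiring R] (A : Matrix ι κ R)
    (B : Matrix κ κ R) (v : ι → R) :
    v ⬝ᵥ ((A * B * Aᵀ) *ᵥ v) = (Aᵀ *ᵥ v) ⬝ᵥ (B *ᵥ (Aᵀ *ᵥ v)) := by
  rw [← mulVec_mulVec, ← mulVec_mulVec, dotProduct_mulVec, ← mulVec_transpose]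

variable [DecidableEq ι]

lemma Matrix.IsSymm.dotProduct_mulVec_sub_inv_mulVec [CommRing R] {S : Matrix ι ι R}
    (hS : S.IsSymm) (hdet : IsUnit S.det) (β c : ι → R) :
    (β - S⁻¹ *ᵥ c) ⬝ᵥ (S *ᵥ (β - S⁻¹ *ᵥ c)) =
      β ⬝ᵥ (S *ᵥ β) - 2 * (β ⬝ᵥ c) + c ⬝ᵥ (S⁻¹ *ᵥ c) := by
  have hSS : S *ᵥ (S⁻¹ *ᵥ c) = c := by rw [mulVec_mulVec, mul_nonsing_inv S hdet, one_mulVec]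
  have hcross : (S⁻¹ *ᵥ c) ⬝ᵥ (S *ᵥ β) = β ⬝ᵥ c := by
    rw [dotProduct_mulVec, ← mulVec_transpose, hS.eq, hSS, dotProduct_comm]
  rw [hS.dotProduct_mulVec_sub, hcross, hSS, dotProduct_comm (S⁻¹ *ᵥ c) c]

end QuadraticForm

lemma KCX_mulVec {n m : ℕ} {K : Matrix (Fin n) (Fin n) ℝ} (hK : K.IsSymm) (e : Fin m → Fin n)
    (α : Fin n → ℝ) : KCX K e *ᵥ α = (K *ᵥ α) ∘ e := by
  rw [KCX, KXC, transpose_submatrix, hK.eq]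
  rfl

lemma dotProduct_nystrom_mulVec {n m : ℕ} (K : Matrix (Fin n) (Fin n) ℝ) (e : Fin m → Fin n)
    (α : Fin n → ℝ) :
    α ⬝ᵥ (nystrom K e *ᵥ α) = (KCX K e *ᵥ α) ⬝ᵥ ((KCC K e)⁻¹ *ᵥ (KCX K e *ᵥ α)) :=
  dotProduct_mul_mul_transpose_mulVec _ _ _

theorem residual_dotProduct_mulVec_eq {n m : ℕ} {K : Matrix (Fin n) (Fin n) ℝ} (hK : K.IsSymm)
    {e : Fin m → Fin n} (he : Injective e) (hdet : IsUnit (KCC K e).det)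
    (α : Fin n → ℝ) (β' : Fin m → ℝ) :
    (α - extend e β' 0) ⬝ᵥ (K *ᵥ (α - extend e β' 0)) =
      α ⬝ᵥ ((K - nystrom K e) *ᵥ α) +
        (β' - (KCC K e)⁻¹ *ᵥ (KCX K e *ᵥ α)) ⬝ᵥ
          (KCC K e *ᵥ (β' - (KCC K e)⁻¹ *ᵥ (KCX K e *ᵥ α))) := by
  have hS : (KCC K e).IsSymm := hK.submatrix e
  rw [hS.dotProduct_mulVec_sub_inv_mulVec hdet, hK.dotProduct_mulVec_sub,
    extend_zero_dotProduct_mulVec_extend_zero he, ← KCC, extend_zero_dotProduct he,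
    ← KCX_mulVec hK, sub_mulVec, dotProduct_sub, dotProduct_nystrom_mulVec]
  ring

/-- Optimality of the orthogonal projection: for every `α ∈ ℝⁿ` and every
candidate control-point weight vector `β'`, the residual `δ' = α − ι(β')` satisfies
`δ'ᵀ K δ' ≥ αᵀ (K − Q) α`, with equality when `β' = K_CC⁻¹ K_CX α`. -/
theorem projection_residual_optimality {n m : ℕ}
    (K : Matrix (Fin n) (Fin n) ℝ) (hK : K.PosDef)
    (e : Fin m → Fin n) (he : Function.Injective e)
    (α : Fin n → ℝ) (β' : Fin m → ℝ) :
    let δ' := α - Function.extend e β' 0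
    α ⬝ᵥ ((K - nystrom K e) *ᵥ α) ≤ δ' ⬝ᵥ (K *ᵥ δ') ∧
      (β' = (KCC K e)⁻¹ *ᵥ (KCX K e *ᵥ α) →
        δ' ⬝ᵥ (K *ᵥ δ') = α ⬝ᵥ ((K - nystrom K e) *ᵥ α)) := by
  have hKCC : (KCC K e).PosDef := hK.submatrix he
  have hdet : IsUnit (KCC K e).det := (isUnit_iff_isUnit_det _).mp hKCC.isUnit
  have hsymm : K.IsSymm := isHermitian_iff_isSymm.mp hK.isHermitian
  dsimp only
  rw [residual_dotProduct_mulVec_eq hsymm he hdet]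
  refine ⟨le_add_of_nonneg_right ?_, fun hβ' ↦ by simp [hβ']⟩
  simpa using hKCC.posSemidef.dotProduct_mulVec_nonneg (β' - (KCC K e)⁻¹ *ᵥ (KCX K e *ᵥ α))
end

section
/- Let K be a real symmetric positive definite n×n matrix, μ > 0, and let e : Fin m → Fin n be injective, with K_CC := K∘(e,e), K_XC := K∘(id,e), K_CX := (K_XC)ᵀ, and Q := K_XC K_CC⁻¹ K_CX. Let A be a real n×d matrix with columns α₁,…,α_d ∈ ℝⁿ. For each j define ỹⱼ := (K + μI) αⱼ, βⱼ := (K_CX K_XC + μ K_CC)⁻¹ K_CX ỹⱼ, and δⱼ := αⱼ − ι(βⱼ), where ι extends by zero along e. Then Σⱼ₌₁^d δⱼᵀ K δⱼ ≤ (2/μ²) · (Σⱼ₌₁^d ‖ỹⱼ‖²) · tr(K − Q). -/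
open Matrix

/-!
Fix a column α and its data y = (K + μ)α. With C the zero-extension matrix along e, the
coefficients β solve the normal equations of kernel ridge regression restricted to the range
of C, while α solves them on all of ℝⁿ. Hence δ = α - Cβ is orthogonal to the range of C for
the energy form K² + μK, so its energy is at most that of α - Cb for the Nyström coefficients
b = K_CC⁻¹ K_CX α. Since K(α - Cb) = Rα with R = K - Q, that energy is ‖Rα‖² + μ αᵀRα, which
also shows R ⪰ 0. For such R, ‖Rα‖² ≤ tr R · αᵀRα and αᵀRα ≤ tr R · ‖α‖², and Q ⪰ 0 gives
αᵀRα ≤ αᵀKα, so μ δᵀKδ ≤ tr R · αᵀy. Finally ‖y‖² - μ αᵀy = ‖Kα‖² + μ αᵀKα ≥ 0.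
-/

namespace Matrix

variable {n m : Type*}

theorem PosSemidef.transpose_eq {M : Matrix n n ℝ} (hM : M.PosSemidef) : Mᵀ = M := by
  simpa using hM.isHermitian.eq

variable [Fintype n] [Fintype m]

theorem PosSemidef.exists_eq_transpose_mul_self [DecidableEq n] {R : Matrix n n ℝ}
    (hR : R.PosSemidef) : ∃ B : Matrix n n ℝ, R = Bᵀ * B := by
  open scoped MatrixOrder in
  refine ⟨CFC.sqrt R, ?_⟩
  open scoped MatrixOrder in
  rw [← conjTranspose_eq_transpose_of_trivial, (CFC.sqrt_nonneg R).posSemidef.isHermitian.eq,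
    CFC.sqrt_mul_sqrt_self R hR.nonneg]

theorem dotProduct_transpose_mul_self_mulVec (B : Matrix m n ℝ) (x : n → ℝ) :
    x ⬝ᵥ ((Bᵀ * B) *ᵥ x) = (B *ᵥ x) ⬝ᵥ (B *ᵥ x) := by
  rw [← mulVec_mulVec, dotProduct_transpose_mulVec, dotProduct_comm]

theorem mulVec_dotProduct_mulVec_le_trace_mul (B : Matrix m n ℝ) (x : n → ℝ) :
    (B *ᵥ x) ⬝ᵥ (B *ᵥ x) ≤ (Bᵀ * B).trace * (x ⬝ᵥ x) := by
  have hrow (i : m) : (B *ᵥ x) i * (B *ᵥ x) i ≤ (B i ⬝ᵥ B i) * (x ⬝ᵥ x) := by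
    simpa [mulVec, dotProduct, sq] using Finset.sum_mul_sq_le_sq_mul_sq Finset.univ (B i) x
  have htrace : (Bᵀ * B).trace = ∑ i, B i ⬝ᵥ B i := by
    simp only [trace, diag, mul_apply, transpose_apply, dotProduct]
    exact Finset.sum_comm
  rw [htrace, Finset.sum_mul]
  exact Finset.sum_le_sum fun i _ => hrow i

theorem PosSemidef.dotProduct_mulVec_le_add_mulVec {M : Matrix n n ℝ} (hM : M.PosSemidef)
    {C : Matrix n m ℝ} {x : n → ℝ} (hx : Cᵀ *ᵥ (M *ᵥ x) = 0) (c : m → ℝ) :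
    x ⬝ᵥ (M *ᵥ x) ≤ (x + C *ᵥ c) ⬝ᵥ (M *ᵥ (x + C *ᵥ c)) := by
  have horth : (C *ᵥ c) ⬝ᵥ (M *ᵥ x) = 0 := by
    rw [dotProduct_comm, ← dotProduct_transpose_mulVec, hx, dotProduct_zero]
  have horth' : x ⬝ᵥ (M *ᵥ (C *ᵥ c)) = 0 := by
    rw [← dotProduct_transpose_mulVec, hM.transpose_eq, horth]
  have hcc : 0 ≤ (C *ᵥ c) ⬝ᵥ (M *ᵥ (C *ᵥ c)) := hM.dotProduct_mulVec_nonneg (C *ᵥ c)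
  rw [mulVec_add, add_dotProduct, dotProduct_add, dotProduct_add, horth, horth']
  linarith

variable [DecidableEq n]

theorem mulVec_nonsing_inv_mulVec {A : Matrix n n ℝ} (hA : IsUnit A.det) (v : n → ℝ) :
    A *ᵥ (A⁻¹ *ᵥ v) = v := by
  rw [mulVec_mulVec, mul_nonsing_inv A hA, one_mulVec]

variable {R : Matrix n n ℝ}

theorem PosSemidef.dotProduct_mulVec_le_trace_mul (hR : R.PosSemidef) (x : n → ℝ) :
    x ⬝ᵥ (R *ᵥ x) ≤ R.trace * (x ⬝ᵥ x) := by
  obtain ⟨B, rfl⟩ := hR.exists_eq_transpose_mul_self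
  rw [dotProduct_transpose_mul_self_mulVec]
  exact mulVec_dotProduct_mulVec_le_trace_mul B x

theorem PosSemidef.mulVec_dotProduct_mulVec_le_trace_mul (hR : R.PosSemidef) (x : n → ℝ) :
    (R *ᵥ x) ⬝ᵥ (R *ᵥ x) ≤ R.trace * (x ⬝ᵥ (R *ᵥ x)) := by
  obtain ⟨B, rfl⟩ := hR.exists_eq_transpose_mul_self
  have h := mulVec_dotProduct_mulVec_le_trace_mul Bᵀ (B *ᵥ x)
  rw [dotProduct_transpose_mul_self_mulVec]
  rwa [transpose_transpose, trace_mul_comm, mulVec_mulVec] at h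

end Matrix

section KernelRidge

variable {n m : Type*} [Fintype n] [Fintype m] [DecidableEq n] {K : Matrix n n ℝ} {μ : ℝ}

/-- Céa's lemma for kernel ridge regression: `β` is the Galerkin projection of `α` onto the
range of `C` for the energy form `K² + μK`. -/
theorem ridge_galerkin_le (hK : K.PosSemidef) (hμ : 0 ≤ μ) (C : Matrix n m ℝ) {α y : n → ℝ}
    (hy : (K + μ • 1) *ᵥ α = y) {β : m → ℝ}
    (hβ : (Cᵀ * K * K * C + μ • (Cᵀ * K * C)) *ᵥ β = Cᵀ *ᵥ (K *ᵥ y)) (b : m → ℝ) :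
    μ * ((α - C *ᵥ β) ⬝ᵥ (K *ᵥ (α - C *ᵥ β))) ≤
      (K *ᵥ (α - C *ᵥ b)) ⬝ᵥ (K *ᵥ (α - C *ᵥ b)) + μ * ((α - C *ᵥ b) ⬝ᵥ (K *ᵥ (α - C *ᵥ b))) := by
  set M := K * K + μ • K with hMdef
  have hM : M.PosSemidef := by
    refine .add ?_ (hK.smul hμ)
    have hKK := posSemidef_conjTranspose_mul_self K
    rwa [conjTranspose_eq_transpose_of_trivial, hK.transpose_eq] at hKK
  have henergy (v : n → ℝ) : v ⬝ᵥ (M *ᵥ v) = (K *ᵥ v) ⬝ᵥ (K *ᵥ v) + μ * (v ⬝ᵥ (K *ᵥ v)) := by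
    rw [add_mulVec, smul_mulVec, dotProduct_add, dotProduct_smul, smul_eq_mul,
      ← dotProduct_transpose_mul_self_mulVec, hK.transpose_eq]
  have hMα : M *ᵥ α = K *ᵥ y := by
    rw [← hy, mulVec_mulVec, hMdef, Matrix.mul_add, Matrix.mul_smul, Matrix.mul_one]
  have hMCβ : Cᵀ *ᵥ (M *ᵥ (C *ᵥ β)) = Cᵀ *ᵥ (K *ᵥ y) := by
    rw [← hβ, mulVec_mulVec, mulVec_mulVec, hMdef]
    simp only [Matrix.mul_add, Matrix.add_mul, Matrix.mul_smul, Matrix.smul_mul, Matrix.mul_assoc]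
  have hgalerkin : Cᵀ *ᵥ (M *ᵥ (α - C *ᵥ β)) = 0 := by
    rw [mulVec_sub, mulVec_sub, hMα, hMCβ, sub_self]
  have hsplit : α - C *ᵥ b = (α - C *ᵥ β) + C *ᵥ (β - b) := by
    rw [mulVec_sub]; abel
  calc μ * ((α - C *ᵥ β) ⬝ᵥ (K *ᵥ (α - C *ᵥ β)))
      ≤ (α - C *ᵥ β) ⬝ᵥ (M *ᵥ (α - C *ᵥ β)) := by
        rw [henergy]
        exact le_add_of_nonneg_left (dotProduct_star_self_nonneg _)
    _ ≤ (α - C *ᵥ b) ⬝ᵥ (M *ᵥ (α - C *ᵥ b)) := by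
        rw [hsplit]; exact hM.dotProduct_mulVec_le_add_mulVec hgalerkin _
    _ = _ := henergy _

theorem ridge_mul_dotProduct_le (hK : K.PosSemidef) (hμ : 0 ≤ μ) {α y : n → ℝ}
    (hy : (K + μ • 1) *ᵥ α = y) : μ * (α ⬝ᵥ y) ≤ y ⬝ᵥ y := by
  have hKα : K *ᵥ α = y - μ • α := by
    rw [← hy, add_mulVec, smul_mulVec, one_mulVec, add_sub_cancel_right]
  have hsplit : y ⬝ᵥ y - μ * (α ⬝ᵥ y) = (K *ᵥ α) ⬝ᵥ (K *ᵥ α) + μ * (α ⬝ᵥ (K *ᵥ α)) := by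
    rw [hKα, sub_dotProduct, smul_dotProduct, dotProduct_sub, dotProduct_sub, dotProduct_smul,
      dotProduct_smul, dotProduct_comm α y]
    simp only [smul_eq_mul]
    ring
  have hKαKα : 0 ≤ (K *ᵥ α) ⬝ᵥ (K *ᵥ α) := dotProduct_star_self_nonneg _
  have hαKα : 0 ≤ α ⬝ᵥ (K *ᵥ α) := hK.dotProduct_mulVec_nonneg α
  linarith [mul_nonneg hμ hαKα]

end KernelRidge

def zeroExtend {n m : Type*} [DecidableEq n] (e : m → n) : Matrix n m ℝ :=
  (1 : Matrix n n ℝ).submatrix id e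

theorem zeroExtend_mulVec {n m : Type*} [Fintype m] [DecidableEq n] {e : m → n}
    (he : Function.Injective e) (b : m → ℝ) : zeroExtend e *ᵥ b = Function.extend e b 0 := by
  ext i
  by_cases hi : ∃ j, e j = i
  · obtain ⟨j, rfl⟩ := hi
    classical
    simp [zeroExtend, mulVec, dotProduct, he.extend_apply, one_apply, he.eq_iff]
  · push Not at hi
    simp [zeroExtend, mulVec, dotProduct, Function.extend_apply' _ _ _ (fun ⟨j, hj⟩ => hi j hj),
      one_apply, Ne.symm (hi _)]

section Nystrom

variable {n m : ℕ} (K : Matrix (Fin n) (Fin n) ℝ) (e : Fin m → Fin n)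

noncomputable def nystromCoeff (α : Fin n → ℝ) : Fin m → ℝ :=
  (KCC K e)⁻¹ *ᵥ (KCX K e *ᵥ α)

theorem mul_zeroExtend : K * zeroExtend e = KXC K e := by
  simpa [zeroExtend, KXC] using mul_submatrix_one (Equiv.refl _) e K

theorem zeroExtend_transpose_mul_mul : (zeroExtend e)ᵀ * K * zeroExtend e = KCC K e := by
  rw [Matrix.mul_assoc, mul_zeroExtend, zeroExtend, transpose_submatrix, transpose_one]
  simpa [KXC, KCC] using one_submatrix_mul e (Equiv.refl _) (KXC K e)

theorem mulVec_sub_zeroExtend_nystromCoeff (α : Fin n → ℝ) :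
    K *ᵥ (α - zeroExtend e *ᵥ nystromCoeff K e α) = (K - nystrom K e) *ᵥ α := by
  rw [mulVec_sub, mulVec_mulVec, mul_zeroExtend, sub_mulVec, nystrom, nystromCoeff]
  simp only [← mulVec_mulVec]

variable {K e}

theorem zeroExtend_transpose_mul (hK : Kᵀ = K) : (zeroExtend e)ᵀ * K = KCX K e := by
  rw [KCX, ← mul_zeroExtend, transpose_mul, hK]

theorem nystrom_posSemidef (hK : K.PosDef) (he : Function.Injective e) :
    (nystrom K e).PosSemidef := by
  rw [nystrom, KCX, ← conjTranspose_eq_transpose_of_trivial]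
  exact (hK.submatrix he).inv.posSemidef.mul_mul_conjTranspose_same _

theorem dotProduct_mulVec_sub_zeroExtend_nystromCoeff (hK : K.PosDef)
    (he : Function.Injective e) (α : Fin n → ℝ) :
    (α - zeroExtend e *ᵥ nystromCoeff K e α) ⬝ᵥ (K *ᵥ (α - zeroExtend e *ᵥ nystromCoeff K e α)) =
      α ⬝ᵥ ((K - nystrom K e) *ᵥ α) := by
  set g := α - zeroExtend e *ᵥ nystromCoeff K e α
  have hsym := hK.posSemidef.transpose_eq
  have hKCC : IsUnit (KCC K e).det := (hK.submatrix he).isUnit.map detMonoidHom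
  have hKCXC : KCX K e * zeroExtend e = KCC K e := by
    rw [← zeroExtend_transpose_mul hsym, zeroExtend_transpose_mul_mul]
  have horth : KCX K e *ᵥ g = 0 := by
    rw [mulVec_sub, mulVec_mulVec, hKCXC, nystromCoeff, mulVec_nonsing_inv_mulVec hKCC, sub_self]
  calc g ⬝ᵥ (K *ᵥ g)
      = α ⬝ᵥ (K *ᵥ g) - nystromCoeff K e α ⬝ᵥ ((zeroExtend e)ᵀ *ᵥ (K *ᵥ g)) := by
        rw [sub_dotProduct, dotProduct_transpose_mulVec, dotProduct_comm (K *ᵥ g)]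
    _ = α ⬝ᵥ ((K - nystrom K e) *ᵥ α) := by
        rw [mulVec_mulVec, zeroExtend_transpose_mul hsym, horth, dotProduct_zero, sub_zero,
          mulVec_sub_zeroExtend_nystromCoeff]

theorem sub_nystrom_posSemidef (hK : K.PosDef) (he : Function.Injective e) :
    (K - nystrom K e).PosSemidef := by
  refine .of_dotProduct_mulVec_nonneg
    (hK.isHermitian.sub (nystrom_posSemidef hK he).isHermitian) fun x => ?_
  rw [star_trivial, ← dotProduct_mulVec_sub_zeroExtend_nystromCoeff hK he]
  exact hK.posSemidef.dotProduct_mulVec_nonneg _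

variable {μ : ℝ}

theorem KCX_mul_KXC_add_smul_KCC_posDef (hK : K.PosDef) (hμ : 0 < μ)
    (he : Function.Injective e) : (KCX K e * KXC K e + μ • KCC K e).PosDef := by
  refine .posSemidef_add ?_ ((hK.submatrix he).smul hμ)
  rw [KCX, ← conjTranspose_eq_transpose_of_trivial]
  exact posSemidef_conjTranspose_mul_self _

theorem nystrom_ridge_error_le (hK : K.PosDef) (hμ : 0 < μ) (he : Function.Injective e)
    {α y : Fin n → ℝ} (hy : (K + μ • 1) *ᵥ α = y) {β : Fin m → ℝ}
    (hβ : (KCX K e * KXC K e + μ • KCC K e) *ᵥ β = KCX K e *ᵥ y) :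
    μ ^ 2 * ((α - Function.extend e β 0) ⬝ᵥ (K *ᵥ (α - Function.extend e β 0))) ≤
      (y ⬝ᵥ y) * (K - nystrom K e).trace := by
  set R := K - nystrom K e
  have hR : R.PosSemidef := sub_nystrom_posSemidef hK he
  have hsym := hK.posSemidef.transpose_eq
  have hβ' : ((zeroExtend e)ᵀ * K * K * zeroExtend e + μ • ((zeroExtend e)ᵀ * K * zeroExtend e))
      *ᵥ β = (zeroExtend e)ᵀ *ᵥ (K *ᵥ y) := by
    rwa [zeroExtend_transpose_mul_mul, Matrix.mul_assoc _ K, mul_zeroExtend,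
      zeroExtend_transpose_mul hsym, mulVec_mulVec, zeroExtend_transpose_mul hsym]
  have henergy := ridge_galerkin_le hK.posSemidef hμ.le (zeroExtend e) hy hβ' (nystromCoeff K e α)
  rw [zeroExtend_mulVec he, dotProduct_mulVec_sub_zeroExtend_nystromCoeff hK he,
    mulVec_sub_zeroExtend_nystromCoeff] at henergy
  have hαRα : α ⬝ᵥ (R *ᵥ α) ≤ α ⬝ᵥ (K *ᵥ α) := by
    have hQ : 0 ≤ α ⬝ᵥ (nystrom K e *ᵥ α) := (nystrom_posSemidef hK he).dotProduct_mulVec_nonneg α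
    rw [sub_mulVec, dotProduct_sub]
    linarith
  have hRα : (R *ᵥ α) ⬝ᵥ (R *ᵥ α) ≤ R.trace * (α ⬝ᵥ (K *ᵥ α)) :=
    (hR.mulVec_dotProduct_mulVec_le_trace_mul α).trans
      (mul_le_mul_of_nonneg_left hαRα hR.trace_nonneg)
  have hαα := mul_le_mul_of_nonneg_left (hR.dotProduct_mulVec_le_trace_mul α) hμ.le
  have hαy : α ⬝ᵥ y = α ⬝ᵥ (K *ᵥ α) + μ * (α ⬝ᵥ α) := by
    rw [← hy, add_mulVec, smul_mulVec, one_mulVec, dotProduct_add, dotProduct_smul, smul_eq_mul]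
  calc μ ^ 2 * ((α - Function.extend e β 0) ⬝ᵥ (K *ᵥ (α - Function.extend e β 0)))
      = μ * (μ * ((α - Function.extend e β 0) ⬝ᵥ (K *ᵥ (α - Function.extend e β 0)))) := by
        ring
    _ ≤ μ * (R.trace * (α ⬝ᵥ y)) := by
        refine mul_le_mul_of_nonneg_left ?_ hμ.le
        rw [hαy]
        linarith
    _ = R.trace * (μ * (α ⬝ᵥ y)) := by ring
    _ ≤ R.trace * (y ⬝ᵥ y) :=
        mul_le_mul_of_nonneg_left (ridge_mul_dotProduct_le hK.posSemidef hμ.le hy) hR.trace_nonneg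
    _ = (y ⬝ᵥ y) * R.trace := mul_comm _ _

end Nystrom

/-- (Matrix form of Lemma 6.1.) For a real symmetric positive definite
matrix `K`, `μ > 0`, injective control indices `e` and an `n × d` weight matrix `A`
with columns `αⱼ`, setting `ỹⱼ = (K + μI) αⱼ`, `βⱼ = (K_CX K_XC + μ K_CC)⁻¹ K_CX ỹⱼ`
and `δⱼ = αⱼ − ι(βⱼ)` (extension by zero along `e`), one has
`∑ⱼ δⱼᵀ K δⱼ ≤ (2/μ²) · (∑ⱼ ‖ỹⱼ‖²) · tr(K − Q)`. -/
theorem field_trace_approx {n m d : ℕ}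
    (K : Matrix (Fin n) (Fin n) ℝ) (hK : K.PosDef)
    (μ : ℝ) (hμ : 0 < μ)
    (e : Fin m → Fin n) (he : Function.Injective e)
    (A : Matrix (Fin n) (Fin d) ℝ) :
    let α : Fin d → Fin n → ℝ := fun j i => A i j
    let ytil : Fin d → Fin n → ℝ :=
      fun j => (K + μ • (1 : Matrix (Fin n) (Fin n) ℝ)) *ᵥ α j
    let β : Fin d → Fin m → ℝ :=
      fun j => (KCX K e * KXC K e + μ • KCC K e)⁻¹ *ᵥ (KCX K e *ᵥ ytil j)
    let δ : Fin d → Fin n → ℝ := fun j => α j - Function.extend e (β j) 0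
    ∑ j : Fin d, δ j ⬝ᵥ (K *ᵥ δ j) ≤
      2 / μ ^ 2 * (∑ j : Fin d, ytil j ⬝ᵥ ytil j) * (K - nystrom K e).trace := by
  intro α ytil β δ
  have hG := (KCX_mul_KXC_add_smul_KCC_posDef hK hμ he).isUnit.map detMonoidHom
  have hcolumn (j : Fin d) :
      μ ^ 2 * (δ j ⬝ᵥ (K *ᵥ δ j)) ≤ (ytil j ⬝ᵥ ytil j) * (K - nystrom K e).trace :=
    nystrom_ridge_error_le hK hμ he rfl (mulVec_nonsing_inv_mulVec hG _)
  have hτ := (sub_nystrom_posSemidef hK he).trace_nonneg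
  have hy : 0 ≤ ∑ j, ytil j ⬝ᵥ ytil j := Finset.sum_nonneg fun j _ => dotProduct_star_self_nonneg _
  rw [div_mul_eq_mul_div, div_mul_eq_mul_div, le_div_iff₀ (by positivity), Finset.sum_mul]
  calc ∑ j, δ j ⬝ᵥ (K *ᵥ δ j) * μ ^ 2 ≤ ∑ j, (ytil j ⬝ᵥ ytil j) * (K - nystrom K e).trace :=
        Finset.sum_le_sum fun j _ => by linarith [hcolumn j]
    _ ≤ 2 * (∑ j, ytil j ⬝ᵥ ytil j) * (K - nystrom K e).trace := by
        rw [← Finset.sum_mul]; nlinarith [mul_nonneg hy hτ]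
end
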